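/- Let T : D(T) → H be a closed densely defined operator on a quaternionic Hilbert space. Then C_T := (1 + T*T)⁻¹ is a well-defined positive operator in B(H) with range equal to D(T*T), and Z_T := T·√(C_T) is defined on all of H, belongs to B(H), and satisfies ‖Z_T‖ ≤ 1 and 1 - Z_T* Z_T = C_T. Moreover Ran(√(C_T)) is a core for T and T = closure of Z_T (√(1 - Z_T* Z_T))⁻¹. -/

import Mathlib

noncomputable section

notation "ℍ" => Quaternion ℝ

open MeasureTheory Filter

/-- Borel σ-algebra on the quaternions. -/
instance : MeasurableSpace ℍ := borel ℍ

instance : BorelSpace ℍ := ⟨rfl⟩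

/-- A quaternionic (right) Hilbert space structure on a normed additive group `H`:
a right scalar multiplication by quaternions together with an ℍ-valued Hermitian
scalar product compatible with the norm.  (Completeness of `H` is assumed
separately via `[CompleteSpace H]`.) -/
structure QHS (H : Type) [NormedAddCommGroup H] where
  smul : H → ℍ → H
  inn : H → H → ℍ
  add_smul' : ∀ (u v : H) (q : ℍ), smul (u + v) q = smul u q + smul v q
  smul_add' : ∀ (u : H) (p q : ℍ), smul u (p + q) = smul u p + smul u q
  smul_mul' : ∀ (u : H) (p q : ℍ), smul u (p * q) = smul (smul u p) q
  smul_one' : ∀ u : H, smul u 1 = u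
  inn_add_right : ∀ u v w : H, inn u (v + w) = inn u v + inn u w
  inn_smul_right : ∀ (u v : H) (q : ℍ), inn u (smul v q) = inn u v * q
  inn_conj : ∀ u v : H, inn u v = star (inn v u)
  inn_self_real : ∀ u : H, inn u u = (((inn u u).re : ℝ) : ℍ)
  norm_sq' : ∀ u : H, ‖u‖ ^ 2 = (inn u u).re

variable {H : Type} [NormedAddCommGroup H]

/-- The graph of an operator `T` with domain `D`. -/
def graphOf (T : H → H) (D : Set H) : Set (H × H) := {p | p.1 ∈ D ∧ p.2 = T p.1}

/-- Domain of a graph. -/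
def graphDom (G : Set (H × H)) : Set H := {u | ∃ w, (u, w) ∈ G}

/-- A function extracted from a graph (by choice). -/
def graphFun (G : Set (H × H)) : H → H := fun u =>
  letI : Nonempty H := ⟨0⟩
  Classical.epsilon fun w => (u, w) ∈ G

/-- Boundedness of an everywhere defined operator. -/
def BoundedOp (T : H → H) : Prop := ∃ C : ℝ, ∀ u : H, ‖T u‖ ≤ C * ‖u‖

/-- The operator norm. -/
def opNorm (T : H → H) : ℝ := sInf {C : ℝ | 0 ≤ C ∧ ∀ u : H, ‖T u‖ ≤ C * ‖u‖}

/-- Closed operator: the graph is closed. -/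
def ClosedOp (T : H → H) (D : Set H) : Prop := IsClosed (graphOf T D)

/-- The domain `D(T²)`. -/
def D2 (T : H → H) (D : Set H) : Set H := {u ∈ D | T u ∈ D}

/-- The slice complex plane `ℂ_ι = {a + ι b}` determined by an imaginary unit `ι`. -/
def Cslice (ι : ℍ) : Set ℍ :=
  {x : ℍ | ∃ a b : ℝ, x = ((a : ℝ) : ℍ) + ι * ((b : ℝ) : ℍ)}

/-- The closed upper half slice plane `ℂ_ι⁺ = {a + ι b : b ≥ 0}`. -/
def Cplus (ι : ℍ) : Set ℍ :=
  {x : ℍ | ∃ a b : ℝ, 0 ≤ b ∧ x = ((a : ℝ) : ℍ) + ι * ((b : ℝ) : ℍ)}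

namespace QHS

variable (𝒮 : QHS H)

/-- Right ℍ-linearity of an everywhere defined map. -/
def RightLinear (T : H → H) : Prop :=
  (∀ u v : H, T (u + v) = T u + T v) ∧ ∀ (u : H) (q : ℍ), T (𝒮.smul u q) = 𝒮.smul (T u) q

/-- A (right ℍ-linear) subspace. -/
def IsSubspace (D : Set H) : Prop :=
  (0 : H) ∈ D ∧ (∀ u ∈ D, ∀ v ∈ D, u + v ∈ D) ∧ ∀ u ∈ D, ∀ q : ℍ, 𝒮.smul u q ∈ D

/-- Right ℍ-linearity on a domain `D`. -/
def RightLinearOn (T : H → H) (D : Set H) : Prop :=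
  (∀ u ∈ D, ∀ v ∈ D, T (u + v) = T u + T v) ∧
    ∀ u ∈ D, ∀ q : ℍ, T (𝒮.smul u q) = 𝒮.smul (T u) q

/-- `S` is the adjoint of `T` (both everywhere defined):  `⟨S u|v⟩ = ⟨u|T v⟩`. -/
def AdjointPair (T S : H → H) : Prop := ∀ u v : H, 𝒮.inn (S u) v = 𝒮.inn u (T v)

def SelfAdjointOp (T : H → H) : Prop := ∀ u v : H, 𝒮.inn (T u) v = 𝒮.inn u (T v)

def AntiSelfAdjointOp (T : H → H) : Prop := ∀ u v : H, 𝒮.inn (T u) v = -𝒮.inn u (T v)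

/-- Positivity: `⟨u|T u⟩` is real and non-negative. -/
def PositiveOp (T : H → H) : Prop :=
  ∀ u : H, 𝒮.inn u (T u) = ((((𝒮.inn u (T u)).re : ℝ)) : ℍ) ∧ 0 ≤ (𝒮.inn u (T u)).re

/-- Positivity on a domain. -/
def PositiveOn (T : H → H) (D : Set H) : Prop :=
  ∀ u ∈ D, 𝒮.inn u (T u) = ((((𝒮.inn u (T u)).re : ℝ)) : ℍ) ∧ 0 ≤ (𝒮.inn u (T u)).re

/-- Unitarity: right linear, surjective, inner-product preserving. -/
def UnitaryOp (T : H → H) : Prop :=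
  𝒮.RightLinear T ∧ Function.Surjective T ∧ ∀ u v : H, 𝒮.inn (T u) (T v) = 𝒮.inn u v

/-- The domain of the adjoint of `T : D → H`. -/
def adjDom (T : H → H) (D : Set H) : Set H :=
  {u : H | ∃ w : H, ∀ v ∈ D, 𝒮.inn w v = 𝒮.inn u (T v)}

/-- The adjoint operator of `T : D → H` (defined by choice; it is the genuine
adjoint when `D` is dense). -/
def adjOp (T : H → H) (D : Set H) : H → H := fun u =>
  letI := Classical.propDecidable
  if h : ∃ w : H, ∀ v ∈ D, 𝒮.inn w v = 𝒮.inn u (T v) then h.choose else 0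

/-- Self-adjointness of an unbounded operator: `T* = T` (same domain, same values). -/
def SelfAdjointUnb (T : H → H) (D : Set H) : Prop :=
  𝒮.adjDom T D = D ∧ ∀ u ∈ D, 𝒮.adjOp T D u = T u

/-- Normality of an unbounded operator: `T T* = T* T`. -/
def NormalUnb (T : H → H) (D : Set H) : Prop :=
  ({u ∈ D | T u ∈ 𝒮.adjDom T D} = {u ∈ 𝒮.adjDom T D | 𝒮.adjOp T D u ∈ D}) ∧
    ∀ u ∈ D, T u ∈ 𝒮.adjDom T D → 𝒮.adjOp T D (T u) = T (𝒮.adjOp T D u)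

/-- The positive square root of a positive bounded operator (by choice). -/
def posSqrt (T : H → H) : H → H :=
  letI : Nonempty (H → H) := ⟨id⟩
  Classical.epsilon fun R : H → H =>
    𝒮.RightLinear R ∧ BoundedOp R ∧ 𝒮.PositiveOp R ∧ 𝒮.SelfAdjointOp R ∧
      ∀ u : H, R (R u) = T u

/-- The operator `Δ_q(T) = T² - T (2 Re q) + |q|² 1`. -/
def Delta (T : H → H) (q : ℍ) : H → H := fun u =>
  T (T u) - 𝒮.smul (T u) (((2 * q.re : ℝ)) : ℍ) + 𝒮.smul u (((‖q‖ ^ 2 : ℝ)) : ℍ)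

/-- Membership in the spherical resolvent set: `Δ_q(T)` is injective with dense range
and bounded inverse. -/
def InSphResolvent (T : H → H) (D : Set H) (q : ℍ) : Prop :=
  (∀ u ∈ D2 T D, 𝒮.Delta T q u = 0 → u = 0) ∧
    Dense (𝒮.Delta T q '' D2 T D) ∧
    ∃ C : ℝ, ∀ u ∈ D2 T D, ‖u‖ ≤ C * ‖𝒮.Delta T q u‖

/-- The spherical spectrum. -/
def sphSpectrum (T : H → H) (D : Set H) : Set ℍ := {q | ¬𝒮.InSphResolvent T D q}

/-- The spherical point spectrum. -/
def sphPointSpectrum (T : H → H) (D : Set H) : Set ℍ :=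
  {q | ∃ u ∈ D2 T D, u ≠ 0 ∧ 𝒮.Delta T q u = 0}

/-- The spherical residual spectrum. -/
def sphResidualSpectrum (T : H → H) (D : Set H) : Set ℍ :=
  {q | (∀ u ∈ D2 T D, 𝒮.Delta T q u = 0 → u = 0) ∧
    ¬Dense (𝒮.Delta T q '' D2 T D)}

/-- The spherical continuous spectrum. -/
def sphContinuousSpectrum (T : H → H) (D : Set H) : Set ℍ :=
  {q | (∀ u ∈ D2 T D, 𝒮.Delta T q u = 0 → u = 0) ∧
    Dense (𝒮.Delta T q '' D2 T D) ∧
    ¬∃ C : ℝ, ∀ u ∈ D2 T D, ‖u‖ ≤ C * ‖𝒮.Delta T q u‖}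

/-- A Hilbert basis of a quaternionic Hilbert space. -/
def IsHilbertBasis (N : Set H) : Prop :=
  (∀ z ∈ N, ‖z‖ = 1) ∧ (∀ z ∈ N, ∀ w ∈ N, z ≠ w → 𝒮.inn z w = 0) ∧
    ∀ u : H, (∀ z ∈ N, 𝒮.inn z u = 0) → u = 0

/-- `L` is the left scalar multiplication induced by the Hilbert basis `N`:
`L_q u = Σ_{z ∈ N} z q ⟨z|u⟩`. -/
def IsInducedLSM (N : Set H) (L : ℍ → H → H) : Prop :=
  ∀ (q : ℍ) (u : H),
    HasSum (fun z : N => 𝒮.smul (z : H) (q * 𝒮.inn (z : H) u)) (L q u)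

/-- `L` is a left scalar multiplication of `H` (induced by some Hilbert basis). -/
def IsLSM (L : ℍ → H → H) : Prop :=
  ∃ N : Set H, 𝒮.IsHilbertBasis N ∧ 𝒮.IsInducedLSM N L

/-- The orthogonal complement of a subset. -/
def orthC (S : Set H) : Set H := {u : H | ∀ v ∈ S, 𝒮.inn u v = 0}

/-- The complex subspace `H₊^{Jι} = {u : J u = u ι}`. -/
def Hplus (J : H → H) (ι : ℍ) : Set H := {u : H | J u = 𝒮.smul u ι}

/-- The complex subspace `H₋^{Jι} = {u : J u = -u ι}`. -/
def Hminus (J : H → H) (ι : ℍ) : Set H := {u : H | J u = -𝒮.smul u ι}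

end QHS

/-- A quaternionic projection valued measure (qPVM) over `ℂ_ι⁺` in `H`. -/
structure IsQPVM (𝒮 : QHS H) (ι : ℍ) (P : Set ℍ → H → H) : Prop where
  proj_linear : ∀ E : Set ℍ, MeasurableSet E → E ⊆ Cplus ι → 𝒮.RightLinear (P E)
  proj_bounded : ∀ E : Set ℍ, MeasurableSet E → E ⊆ Cplus ι → BoundedOp (P E)
  proj_idem : ∀ E : Set ℍ, MeasurableSet E → E ⊆ Cplus ι → ∀ u, P E (P E u) = P E u
  proj_sa : ∀ E : Set ℍ, MeasurableSet E → E ⊆ Cplus ι → 𝒮.SelfAdjointOp (P E)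
  proj_pos : ∀ E : Set ℍ, MeasurableSet E → E ⊆ Cplus ι → 𝒮.PositiveOp (P E)
  total : ∀ u : H, P (Cplus ι) u = u
  inter : ∀ E F : Set ℍ, MeasurableSet E → E ⊆ Cplus ι → MeasurableSet F → F ⊆ Cplus ι →
    ∀ u, P (E ∩ F) u = P E (P F u)
  sigma_add : ∀ E : ℕ → Set ℍ, (∀ n, MeasurableSet (E n) ∧ E n ⊆ Cplus ι) →
    (Pairwise fun n m => Disjoint (E n) (E m)) →
    ∀ u : H, HasSum (fun n => P (E n) u) (P (⋃ n, E n) u)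

/-- The support of a qPVM: points of `ℂ_ι⁺` all of whose relatively open neighbourhoods
have non-zero projection. -/
def suppP (ι : ℍ) (P : Set ℍ → H → H) : Set ℍ :=
  {x ∈ Cplus ι | ∀ U : Set ℍ, IsOpen U → x ∈ U → ∃ u : H, P (U ∩ Cplus ι) u ≠ 0}

/-- An intertwining quaternionic PVM (iqPVM): a qPVM together with a commuting left
scalar multiplication. -/
def IsIQPVM (𝒮 : QHS H) (ι : ℍ) (P : Set ℍ → H → H) (L : ℍ → H → H) : Prop :=
  IsQPVM 𝒮 ι P ∧ 𝒮.IsLSM L ∧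
    ∀ E : Set ℍ, MeasurableSet E → E ⊆ Cplus ι →
      ∀ (q : ℍ) (u : H), P E (L q u) = L q (P E u)

/-- Data of a simple function: coefficients and pairwise disjoint Borel subsets of `ℂ_ι⁺`. -/
def IsSimpleData (ι : ℍ) {n : ℕ} (c : Fin n → ℍ) (E : Fin n → Set ℍ) : Prop :=
  (∀ ℓ, MeasurableSet (E ℓ) ∧ E ℓ ⊆ Cplus ι) ∧
    Pairwise fun ℓ ℓ' => Disjoint (E ℓ) (E ℓ')

/-- `S = ∫ φ d𝒫`, characterized by uniform approximation (on the support of `P`)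
by simple functions together with approximation of `S` by the corresponding
elementary integrals `Σ_ℓ L_{c_ℓ} P(E_ℓ)`. -/
def IsBoundedIntegral (𝒮 : QHS H) (ι : ℍ) (P : Set ℍ → H → H) (L : ℍ → H → H)
    (φ : ℍ → ℍ) (S : H → H) : Prop :=
  ∀ ε : ℝ, 0 < ε → ∃ (n : ℕ) (c : Fin n → ℍ) (E : Fin n → Set ℍ),
    IsSimpleData ι c E ∧
    (∀ x ∈ suppP ι P, ‖φ x - ∑ ℓ, Set.indicator (E ℓ) (fun _ => c ℓ) x‖ ≤ ε) ∧
    ∀ u : H, ‖S u - ∑ ℓ, L (c ℓ) (P (E ℓ) u)‖ ≤ ε * ‖u‖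

/-- The integral of a bounded measurable function with respect to an iqPVM
(defined by choice from the characterizing property). -/
def bInt (𝒮 : QHS H) (ι : ℍ) (P : Set ℍ → H → H) (L : ℍ → H → H) (φ : ℍ → ℍ) : H → H :=
  letI : Nonempty (H → H) := ⟨id⟩
  Classical.epsilon fun S : H → H => IsBoundedIntegral 𝒮 ι P L φ S

/-- The `P`-essential supremum norm `‖φ‖_∞^{(P)}`. -/
def essSupNorm (ι : ℍ) (P : Set ℍ → H → H) (φ : ℍ → ℍ) : ℝ :=
  sInf {k : ℝ | 0 ≤ k ∧ ∀ u : H, P {x ∈ Cplus ι | k < ‖φ x‖} u = 0}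

/-- `μ` is the positive Borel measure `μ_u^{(P)} : E ↦ ⟨u|P(E)u⟩`. -/
def muMatches (𝒮 : QHS H) (ι : ℍ) (P : Set ℍ → H → H) (u : H) (μ : Measure ℍ) : Prop :=
  ∀ E : Set ℍ, MeasurableSet E →
    μ E = ENNReal.ofReal ((𝒮.inn u (P (E ∩ Cplus ι) u)).re)

/-- The natural domain `D_f = {u : f ∈ L²(μ_u^{(P)})}` of `∫ f d𝒫`. -/
def Dnat (𝒮 : QHS H) (ι : ℍ) (P : Set ℍ → H → H) (f : ℍ → ℍ) : Set H :=
  {u : H | ∃ μ : Measure ℍ, muMatches 𝒮 ι P u μ ∧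
    (∫⁻ x, ENNReal.ofReal (‖f x‖ ^ 2) ∂μ) < ⊤}

/-- The truncation of `f` at level `n`. -/
def trunc (f : ℍ → ℍ) (n : ℕ) : ℍ → ℍ := fun x => if ‖f x‖ ≤ (n : ℝ) then f x else 0

/-- The integral of a possibly unbounded measurable function with respect to an iqPVM:
the strong limit of the integrals of its truncations. -/
def uInt (𝒮 : QHS H) (ι : ℍ) (P : Set ℍ → H → H) (L : ℍ → H → H) (f : ℍ → ℍ) : H → H :=
  fun u =>
    letI : Nonempty H := ⟨0⟩
    limUnder atTop fun n : ℕ => bInt 𝒮 ι P L (trunc f n) u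

/-- The inverse `(1 + T*T)⁻¹` of `1 + T*T` (by choice). -/
def CT (𝒮 : QHS H) (T : H → H) (D : Set H) : H → H :=
  letI : Nonempty (H → H) := ⟨id⟩
  Classical.epsilon fun C : H → H =>
    (∀ y : H, C y ∈ D ∧ T (C y) ∈ 𝒮.adjDom T D ∧ C y + 𝒮.adjOp T D (T (C y)) = y) ∧
      ∀ u ∈ D, T u ∈ 𝒮.adjDom T D → C (u + 𝒮.adjOp T D (T u)) = u

/-- The bounded transform `Z_T = T (1 + T*T)^{-1/2}`. -/
def ZT (𝒮 : QHS H) (T : H → H) (D : Set H) : H → H := fun u =>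
  T (𝒮.posSqrt (CT 𝒮 T D) u)

end

/-!
Restricting scalars to `ℂ ⊆ ℍ` makes `H` a complex Hilbert space on which right multiplication
by `j` is antiunitary, and quaternionic linearity becomes complex linearity plus commuting with `j`.
In `H ⊕ H` the orthogonal projection onto the closed graph of `T` sends `(y, 0)` to
`(C y, T (C y))`, and its orthogonality relations say weakly that `C = (1 + T*T)⁻¹`; hence `C` is
bounded, positive and injective with dense range, and `⟪y, C y⟫ = ‖C y‖² + ‖T (C y)‖²`.
For the positive square root `P` of `C` (which commutes with `j` by uniqueness of square roots)
this reads `‖T (C y)‖ ≤ ‖P y‖`, so `T ∘ P` is a contraction on the dense range of `C`, and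
closedness of `T` extends this to all of `H`: `P` maps into `D(T)`, `Z = T P` is a contraction and
`⟪Z u, Z v⟫ = ⟪u, v⟫ - ⟪u, C v⟫`. Finally `Ran C ⊆ Ran P` is a core, because `(x, T x)` is
orthogonal to every `(C y, T (C y))` only when `⟪y, x⟫ = 0` for all `y`.
-/

open scoped ComplexConjugate

local notation "⟪" x ", " y "⟫" => inner ℂ x y

def Quaternion.complexPart (q : ℍ) : ℂ := ⟨q.re, q.imI⟩

def Quaternion.j : ℍ := ⟨0, 0, 1, 0⟩

@[simp] lemma Quaternion.re_j : Quaternion.j.re = 0 := rfl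

@[simp] lemma Quaternion.imI_j : Quaternion.j.imI = 0 := rfl

@[simp] lemma Quaternion.imJ_j : Quaternion.j.imJ = 1 := rfl

@[simp] lemma Quaternion.imK_j : Quaternion.j.imK = 0 := rfl

@[simp] lemma Quaternion.re_complexPart (q : ℍ) : q.complexPart.re = q.re := rfl

@[simp] lemma Quaternion.im_complexPart (q : ℍ) : q.complexPart.im = q.imI := rfl

lemma Quaternion.complexPart_add (p q : ℍ) :
    (p + q).complexPart = p.complexPart + q.complexPart := by
  apply Complex.ext <;> simp

lemma Quaternion.complexPart_star (q : ℍ) : (star q).complexPart = conj q.complexPart := by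
  apply Complex.ext <;> simp

lemma Quaternion.complexPart_coe_mul (c : ℂ) (q : ℍ) :
    ((c : ℍ) * q).complexPart = c * q.complexPart := by
  apply Complex.ext <;> simp [Quaternion.re_mul, Quaternion.imI_mul]

lemma Quaternion.coe_complexPart_add (q : ℍ) :
    (q.complexPart : ℍ) + ((-(q * Quaternion.j).complexPart : ℂ) : ℍ) * Quaternion.j = q := by
  ext <;> simp [Quaternion.re_mul, Quaternion.imI_mul, Quaternion.imJ_mul, Quaternion.imK_mul]

lemma Quaternion.ext_complexPart {p q : ℍ} (h : p.complexPart = q.complexPart)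
    (hj : (p * Quaternion.j).complexPart = (q * Quaternion.j).complexPart) : p = q := by
  rw [← p.coe_complexPart_add, ← q.coe_complexPart_add, h, hj]

lemma Quaternion.j_mul_j : Quaternion.j * Quaternion.j = -1 := by
  ext <;> simp [Quaternion.re_mul, Quaternion.imI_mul, Quaternion.imJ_mul, Quaternion.imK_mul]

lemma Quaternion.coe_mul_j (c : ℂ) : (c : ℍ) * Quaternion.j = Quaternion.j * (conj c : ℂ) := by
  ext <;> simp [Quaternion.re_mul, Quaternion.imI_mul, Quaternion.imJ_mul, Quaternion.imK_mul]

lemma Quaternion.complexPart_star_j_mul (q : ℍ) :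
    (star Quaternion.j * (q * Quaternion.j)).complexPart = conj q.complexPart := by
  apply Complex.ext <;>
    simp [Quaternion.re_mul, Quaternion.imI_mul, Quaternion.imJ_mul, Quaternion.imK_mul]

lemma Quaternion.norm_coeComplex (c : ℂ) : ‖(c : ℍ)‖ = ‖c‖ := by
  rw [← sq_eq_sq₀ (norm_nonneg _) (norm_nonneg _), sq, ← Quaternion.normSq_eq_norm_mul_self,
    Quaternion.normSq_def', Complex.sq_norm, Complex.normSq_apply]
  simp; ring

lemma Quaternion.star_coeComplex (c : ℂ) : star (c : ℍ) = ((conj c : ℂ) : ℍ) := by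
  ext <;> simp

namespace QHS

variable {H : Type} [NormedAddCommGroup H] (𝒮 : QHS H)

lemma zero_smul (u : H) : 𝒮.smul u 0 = 0 := by
  simpa using (𝒮.smul_add' u 0 0).symm

lemma smul_zero (q : ℍ) : 𝒮.smul 0 q = 0 := by
  simpa using (𝒮.add_smul' 0 0 q).symm

lemma smul_neg_one (u : H) : 𝒮.smul u (-1) = -u := by
  refine eq_neg_of_add_eq_zero_left ?_
  conv_lhs => rhs; rw [← 𝒮.smul_one' u]
  rw [← 𝒮.smul_add', neg_add_cancel, 𝒮.zero_smul]

lemma inn_add_left (u v w : H) : 𝒮.inn (u + v) w = 𝒮.inn u w + 𝒮.inn v w := by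
  rw [𝒮.inn_conj, 𝒮.inn_add_right, star_add, ← 𝒮.inn_conj, ← 𝒮.inn_conj]

lemma inn_smul_left (u v : H) (q : ℍ) : 𝒮.inn (𝒮.smul u q) v = star q * 𝒮.inn u v := by
  rw [𝒮.inn_conj, 𝒮.inn_smul_right, star_mul, ← 𝒮.inn_conj]

lemma norm_smul (u : H) (q : ℍ) : ‖𝒮.smul u q‖ = ‖q‖ * ‖u‖ := by
  rw [← sq_eq_sq₀ (norm_nonneg _) (by positivity), 𝒮.norm_sq', inn_smul_left, 𝒮.inn_smul_right,
    𝒮.inn_self_real u, Quaternion.coe_commutes, ← mul_assoc, Quaternion.star_mul_self,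
    ← Quaternion.coe_mul, Quaternion.re_coe, mul_pow, sq ‖q‖, ← Quaternion.normSq_eq_norm_mul_self,
    ← 𝒮.norm_sq']

structure IsCompatible [InnerProductSpace ℂ H] : Prop where
  inner_eq : ∀ u v : H, ⟪u, v⟫ = (𝒮.inn u v).complexPart
  smul_eq : ∀ (c : ℂ) (u : H), c • u = 𝒮.smul u c

theorem exists_isCompatible : ∃ _ : InnerProductSpace ℂ H, 𝒮.IsCompatible := by
  let _ : Module ℂ H :=
    { smul := fun c u => 𝒮.smul u c
      one_smul := 𝒮.smul_one'
      mul_smul := fun c d u => by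
        change 𝒮.smul u ((c * d : ℂ) : ℍ) = 𝒮.smul (𝒮.smul u d) c
        rw [← 𝒮.smul_mul', ← Quaternion.coeComplex_mul, mul_comm d]
      smul_zero := fun c => 𝒮.smul_zero c
      smul_add := fun c u v => 𝒮.add_smul' u v c
      add_smul := fun c d u => by
        change 𝒮.smul u ((c + d : ℂ) : ℍ) = _
        rw [Quaternion.coeComplex_add, 𝒮.smul_add']; rfl
      zero_smul := 𝒮.zero_smul }
  let _ : NormedSpace ℂ H :=
    { norm_smul_le := fun c u => by
        rw [← Quaternion.norm_coeComplex]
        exact (𝒮.norm_smul u c).le }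
  let inst : InnerProductSpace ℂ H :=
    { inner := fun u v => (𝒮.inn u v).complexPart
      norm_sq_eq_re_inner := 𝒮.norm_sq'
      conj_inner_symm := fun u v => by
        change conj (𝒮.inn v u).complexPart = (𝒮.inn u v).complexPart
        rw [← Quaternion.complexPart_star, ← 𝒮.inn_conj]
      add_left := fun u v w => by
        change (𝒮.inn (u + v) w).complexPart = _
        rw [inn_add_left, Quaternion.complexPart_add]
      smul_left := fun u v c => by
        change (𝒮.inn (𝒮.smul u c) v).complexPart = conj c * (𝒮.inn u v).complexPart
        rw [inn_smul_left, Quaternion.star_coeComplex, Quaternion.complexPart_coe_mul] }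
  exact ⟨inst, fun _ _ => rfl, fun _ _ => rfl⟩

end QHS

section HilbertSpace

variable {E : Type*} [NormedAddCommGroup E] [InnerProductSpace ℂ E]

lemma eq_zero_of_dense_of_forall_inner_eq_zero {D : Set E} (hD : Dense D) {x : E}
    (h : ∀ v ∈ D, ⟪x, v⟫ = 0) : x = 0 := by
  have hx : (fun v => ⟪x, v⟫) = fun _ => 0 :=
    Continuous.ext_on hD (by fun_prop) continuous_const h
  simpa using congrFun hx x

theorem Submodule.topologicalClosure_eq_of_le [CompleteSpace E] {M G : Submodule ℂ E}
    (hMG : M ≤ G) (hG : IsClosed (G : Set E)) (h : Mᗮ ⊓ G = ⊥) : M.topologicalClosure = G := by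
  have hsup := sup_orthogonal_inf_of_hasOrthogonalProjection (M.topologicalClosure_minimal hMG hG)
  rwa [orthogonal_closure, h, sup_bot_eq] at hsup

lemma map_sub_of_inner_symm {P : E → E} (hP : ∀ x y, ⟪P x, y⟫ = ⟪x, P y⟫) (x y : E) :
    P (x - y) = P x - P y :=
  ext_inner_right ℂ fun z => by rw [hP, inner_sub_left, inner_sub_left, hP, hP]

end HilbertSpace

section Antiunitary

variable {E : Type*} [NormedAddCommGroup E] [InnerProductSpace ℂ E] [CompleteSpace E]

theorem CFC.sqrt_apply_antiunitary (U : E ≃ₗ⋆[ℂ] E) (hU : ∀ x y, ⟪U x, U y⟫ = conj ⟪x, y⟫)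
    {A : E →L[ℂ] E} (hA : 0 ≤ A) (hAU : ∀ x, A (U x) = U (A x)) (x : E) :
    CFC.sqrt A (U x) = U (CFC.sqrt A x) := by
  set B := CFC.sqrt A
  have hB : B.IsPositive := (B.nonneg_iff_isPositive).mp (CFC.sqrt_nonneg A)
  have hBB : ∀ y, B (B y) = A y := fun y => by
    rw [← mul_apply_eq_comp, CFC.sqrt_mul_sqrt_self A hA]
  have hUsymm : ∀ a b, ⟪U.symm a, b⟫ = conj ⟪a, U b⟫ := fun a b => by
    have h := hU (U.symm a) b
    rw [LinearEquiv.apply_symm_apply] at h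
    rw [h, Complex.conj_conj]
  have hUnorm : ∀ y, ‖U.symm y‖ = ‖y‖ := fun y => by
    rw [← sq_eq_sq₀ (norm_nonneg _) (norm_nonneg _), ← inner_self_eq_norm_sq (𝕜 := ℂ),
      ← inner_self_eq_norm_sq (𝕜 := ℂ), hUsymm, LinearEquiv.apply_symm_apply, RCLike.conj_re]
  -- `ψ = U⁻¹ B U` is another positive square root of `A`, hence equals `B`
  let ψ : E →L[ℂ] E :=
    (U.symm.toLinearMap ∘ₛₗ (B : E →ₗ[ℂ] E) ∘ₛₗ U.toLinearMap).mkContinuous ‖B‖ fun y => by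
      simpa [hUnorm, ← hUnorm (U y)] using B.le_opNorm (U y)
  have hψ : ∀ y, ψ y = U.symm (B (U y)) := fun _ => rfl
  have hψψ : ψ * ψ = A := by
    ext y
    simp only [mul_apply_eq_comp, hψ, LinearEquiv.apply_symm_apply, hBB, hAU,
      LinearEquiv.symm_apply_apply]
  have hψpos : 0 ≤ ψ := by
    refine (ψ.nonneg_iff_isPositive).mpr ⟨fun y z => ?_, fun y => ?_⟩
    · change ⟪ψ y, z⟫ = ⟪y, ψ z⟫
      rw [hψ, hψ, hUsymm, hB.inner_left_eq_inner_right, inner_conj_symm,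
        ← inner_conj_symm y (U.symm _), hUsymm, Complex.conj_conj]
    · change 0 ≤ RCLike.re ⟪ψ y, y⟫
      rw [hψ, hUsymm, RCLike.conj_re]
      exact hB.re_inner_nonneg_left (U y)
  have hBψ : B = ψ := CFC.sqrt_unique hψψ hψpos
  conv_rhs => rw [hBψ, hψ, LinearEquiv.apply_symm_apply]

end Antiunitary

theorem ClosedOp.mem_and_lipschitzWith_of_dense {E : Type} [NormedAddCommGroup E] [CompleteSpace E]
    {T A : E → E} {D S : Set E} {K : NNReal} (hT : ClosedOp T D) (hA : Continuous A)
    (hS : Dense S) (hAS : ∀ x ∈ S, A x ∈ D) (hTA : LipschitzOnWith K (T ∘ A) S) :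
    (∀ x, A x ∈ D) ∧ LipschitzWith K (T ∘ A) := by
  set F := hS.extend fun x : S => T (A x)
  have hF : LipschitzWith K F := hS.lipschitzWith_extend hTA.to_restrict
  have hgraph : ∀ x, (A x, F x) ∈ graphOf T D := by
    refine hS.induction (fun x hx => ?_) (hT.preimage (hA.prodMk hF.continuous))
    rw [show F x = T (A x) from hS.extend_eq hTA.to_restrict.continuous ⟨x, hx⟩]
    exact ⟨hAS x hx, rfl⟩
  have hFTA : T ∘ A = F := funext fun x => (hgraph x).2.symm
  exact ⟨fun x => (hgraph x).1, hFTA ▸ hF⟩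

lemma BoundedOp.continuous {E : Type} [NormedAddCommGroup E] {A : E → E} (hA : BoundedOp A)
    (hadd : ∀ x y, A (x + y) = A x + A y) : Continuous A := by
  obtain ⟨K, hK⟩ := hA
  exact AddMonoidHomClass.continuous_of_bound (AddMonoidHom.mk' A hadd) K hK

section Resolvent

variable {E : Type*} [NormedAddCommGroup E] [InnerProductSpace ℂ E]

/-- `C = (1 + T*T)⁻¹`, with `(1 + T*T) C = 1` and `C (1 + T*T) = 1` read weakly through the form
`⟪T ·, T ·⟫` on `D`, so that the adjoint of `T` never appears. -/
structure IsResolvent (T : E → E) (D : Set E) (C : E →L[ℂ] E) : Prop where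
  mem : ∀ y, C y ∈ D
  inner_sub : ∀ y, ∀ v ∈ D, ⟪y - C y, v⟫ = ⟪T (C y), T v⟫
  apply_add : ∀ z ∈ D, ∀ w, (∀ v ∈ D, ⟪w, v⟫ = ⟪T z, T v⟫) → C (z + w) = z

namespace IsResolvent

variable {T : E → E} {D : Set E} {C : E →L[ℂ] E}

lemma inner_apply (hC : IsResolvent T D C) (u v : E) :
    ⟪u, C v⟫ = ⟪C u, C v⟫ + ⟪T (C u), T (C v)⟫ := by
  rw [← hC.inner_sub u _ (hC.mem v), inner_sub_left, add_sub_cancel]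

lemma re_inner_apply_self (hC : IsResolvent T D C) (y : E) :
    RCLike.re ⟪y, C y⟫ = ‖C y‖ ^ 2 + ‖T (C y)‖ ^ 2 := by
  rw [hC.inner_apply, map_add, inner_self_eq_norm_sq, inner_self_eq_norm_sq]

lemma isPositive (hC : IsResolvent T D C) : C.IsPositive := by
  refine ⟨fun u v => ?_, fun y => ?_⟩
  · change ⟪C u, v⟫ = ⟪u, C v⟫
    rw [← inner_conj_symm, hC.inner_apply, map_add, inner_conj_symm, inner_conj_symm,
      ← hC.inner_apply]
  · change 0 ≤ RCLike.re ⟪C y, y⟫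
    rw [← inner_conj_symm, RCLike.conj_re, hC.re_inner_apply_self]
    positivity

lemma map_zero (hC : IsResolvent T D C) : T 0 = 0 := by
  have h := hC.inner_sub 0 0 (by simpa using hC.mem 0)
  rw [_root_.map_zero, sub_zero, inner_zero_left, eq_comm, inner_self_eq_zero] at h
  exact h

lemma injective (hC : IsResolvent T D C) (hD : Dense D) : Function.Injective C := by
  refine (injective_iff_map_eq_zero C).mpr fun y hy => ?_
  refine eq_zero_of_dense_of_forall_inner_eq_zero hD fun v hv => ?_
  simpa [hy, hC.map_zero] using hC.inner_sub y v hv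

lemma denseRange [CompleteSpace E] (hC : IsResolvent T D C) (hD : Dense D) : DenseRange C := by
  have hker : LinearMap.ker (C : E →ₗ[ℂ] E) = ⊥ :=
    LinearMap.ker_eq_bot.mpr (hC.injective hD)
  have hclosure := Submodule.topologicalClosure_eq_top_iff.mpr
    (hC.isPositive.isSymmetric.orthogonal_range.trans hker)
  exact Submodule.dense_iff_topologicalClosure_eq_top.mpr hclosure

variable {P : E → E}

lemma norm_apply_le_of_sq (hC : IsResolvent T D C) (hP : ∀ x y, ⟪P x, y⟫ = ⟪x, P y⟫)
    (hPP : ∀ x, P (P x) = C x) (y : E) : ‖T (C y)‖ ≤ ‖P y‖ := by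
  have h : ‖P y‖ ^ 2 = ‖C y‖ ^ 2 + ‖T (C y)‖ ^ 2 := by
    rw [← hC.re_inner_apply_self, ← hPP, ← hP, inner_self_eq_norm_sq]
  exact le_of_sq_le_sq (by nlinarith [sq_nonneg ‖C y‖]) (norm_nonneg _)

lemma norm_apply_sqrt_le (hC : IsResolvent T D C) (hP : ∀ x y, ⟪P x, y⟫ = ⟪x, P y⟫)
    (hTP : LipschitzWith 1 (T ∘ P)) (u : E) : ‖T (P u)‖ ≤ ‖u‖ := by
  have hP0 : P 0 = 0 := by simpa using map_sub_of_inner_symm hP 0 0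
  simpa [hP0, hC.map_zero] using hTP.dist_le_mul u 0

theorem inner_sqrt [CompleteSpace E] (hC : IsResolvent T D C) (hD : Dense D)
    (hP : ∀ x y, ⟪P x, y⟫ = ⟪x, P y⟫) (hPP : ∀ x, P (P x) = C x) (hPD : ∀ x, P x ∈ D)
    (hTP : Continuous (T ∘ P)) (u v : E) : ⟪T (P u), T (P v)⟫ = ⟪u, v⟫ - ⟪u, C v⟫ := by
  have hPC : ∀ y, P (C y) = C (P y) := fun y => by rw [← hPP, hPP]
  refine congrFun (Continuous.ext_on (hC.denseRange hD) (g := fun v => ⟪u, v⟫ - ⟪u, C v⟫)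
    (continuous_const.inner hTP) (by fun_prop) ?_) v
  rintro _ ⟨y, rfl⟩
  change ⟪T (P u), T (P (C y))⟫ = ⟪u, C y⟫ - ⟪u, C (C y)⟫
  rw [hPC, ← inner_conj_symm, ← hC.inner_sub _ _ (hPD u), inner_conj_symm, inner_sub_right, hP,
    hPP, ← hPC, hP, hPP]

lemma sub_adjoint_apply (hC : IsResolvent T D C) {Z Zs : E → E}
    (hZ : ∀ u v, ⟪Z u, Z v⟫ = ⟪u, v⟫ - ⟪u, C v⟫)
    (hZs : ∀ a v, ⟪Zs a, v⟫ = ⟪a, Z v⟫) (u : E) : u - Zs (Z u) = C u :=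
  ext_inner_right ℂ fun t => by
    rw [inner_sub_left, hZs, hZ, sub_sub_cancel, hC.isPositive.inner_left_eq_inner_right]

end IsResolvent

/-- von Neumann's construction of `(1 + T*T)⁻¹` from the graph `G` of `T`. -/
noncomputable def graphResolvent (G : Submodule ℂ (WithLp 2 (E × E))) [G.HasOrthogonalProjection] :
    E →L[ℂ] E :=
  WithLp.fstL 2 ℂ E E ∘L G.starProjection ∘L
    (WithLp.prodContinuousLinearEquiv 2 ℂ E E).symm.toContinuousLinearMap ∘L
      ContinuousLinearMap.inl ℂ E E

theorem isResolvent_graphResolvent {T : E → E} {D : Set E}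
    (G : Submodule ℂ (WithLp 2 (E × E))) [G.HasOrthogonalProjection]
    (hG : ∀ p, p ∈ G ↔ p.fst ∈ D ∧ p.snd = T p.fst) : IsResolvent T D (graphResolvent G) := by
  have hgraph : ∀ v ∈ D, WithLp.toLp 2 (v, T v) ∈ G := fun v hv => (hG _).mpr ⟨hv, rfl⟩
  have hproj : ∀ y, G.starProjection (WithLp.toLp 2 (y, 0)) =
      WithLp.toLp 2 (graphResolvent G y, T (graphResolvent G y)) := fun y => by
    obtain ⟨-, hsnd⟩ := (hG _).mp (G.starProjection_apply_mem (WithLp.toLp 2 (y, 0)))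
    set p := G.starProjection (WithLp.toLp 2 (y, 0))
    change p = WithLp.toLp 2 (p.fst, T p.fst)
    rw [← hsnd]
    rfl
  refine ⟨fun y => ((hG _).mp (G.starProjection_apply_mem _)).1, fun y v hv => ?_,
    fun z hz w hw => ?_⟩
  · have horth := G.sub_starProjection_mem_orthogonal (WithLp.toLp 2 (y, 0)) _ (hgraph v hv)
    rw [hproj] at horth
    simp only [WithLp.prod_inner_apply, WithLp.ofLp_sub, Prod.fst_sub, Prod.snd_sub, zero_sub,
      inner_neg_right, add_neg_eq_zero] at horth
    rw [← inner_conj_symm, horth, inner_conj_symm]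
  · have hvo : WithLp.toLp 2 (z + w, 0) - WithLp.toLp 2 (z, T z) ∈ Gᗮ := by
      refine (Submodule.mem_orthogonal _ _).mpr fun g hg => ?_
      obtain ⟨hg1, hg2⟩ := (hG g).mp hg
      simp only [WithLp.prod_inner_apply, WithLp.ofLp_sub, Prod.fst_sub, Prod.snd_sub,
        add_sub_cancel_left, zero_sub, inner_neg_right, WithLp.ofLp_fst, WithLp.ofLp_snd, hg2]
      rw [← inner_conj_symm, hw _ hg1, inner_conj_symm, add_neg_cancel]
    have h := G.eq_starProjection_of_mem_orthogonal (hgraph z hz) hvo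
    exact congrArg WithLp.fst h

end Resolvent

namespace IsResolvent

variable {E : Type} [NormedAddCommGroup E] [InnerProductSpace ℂ E] {T : E → E} {D : Set E}
  {C : E →L[ℂ] E}

theorem closure_graphOf [CompleteSpace E] {S : Set E} (hC : IsResolvent T D C)
    (hT : ClosedOp T D) (G : Submodule ℂ (WithLp 2 (E × E)))
    (hG : ∀ p, p ∈ G ↔ p.fst ∈ D ∧ p.snd = T p.fst) (hCS : Set.range C ⊆ S) (hSD : S ⊆ D) :
    closure (graphOf T S) = graphOf T D := by
  let e := WithLp.prodContinuousLinearEquiv 2 ℂ E E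
  have hGe : (G : Set (WithLp 2 (E × E))) = e ⁻¹' graphOf T D := Set.ext hG
  let M : Submodule ℂ (WithLp 2 (E × E)) :=
    G ⊓ (LinearMap.range (C : E →ₗ[ℂ] E)).comap (WithLp.fstₗ 2 ℂ E E)
  have hGclosed : IsClosed (G : Set (WithLp 2 (E × E))) := by
    rw [hGe]
    exact hT.preimage e.continuous
  have hMG : M.topologicalClosure = G := by
    refine Submodule.topologicalClosure_eq_of_le inf_le_left hGclosed ?_
    refine (Submodule.eq_bot_iff _).mpr fun p ⟨hpM, hpG⟩ => ?_
    obtain ⟨hp1, hp2⟩ := (hG p).mp hpG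
    have hfst : ∀ y, ⟪y, p.fst⟫ = 0 := fun y => by
      have hmem : WithLp.toLp 2 (C y, T (C y)) ∈ M := ⟨(hG _).mpr ⟨hC.mem y, rfl⟩, y, rfl⟩
      have h := hpM _ hmem
      simp only [WithLp.prod_inner_apply, WithLp.ofLp_fst, WithLp.ofLp_snd, hp2] at h
      rw [← sub_add_cancel y (C y), inner_add_left, hC.inner_sub y _ hp1, add_comm]
      exact h
    have h0 : p.fst = 0 := inner_self_eq_zero.mp (hfst _)
    apply WithLp.ofLp_injective 2
    rw [WithLp.ofLp_zero]
    exact Prod.ext h0 (by simp [WithLp.ofLp_snd, hp2, h0, hC.map_zero])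
  have hMS : e '' (M : Set (WithLp 2 (E × E))) ⊆ graphOf T S := by
    rintro _ ⟨p, ⟨hpG, y, hy⟩, rfl⟩
    exact ⟨hCS ⟨y, hy⟩, ((hG p).mp hpG).2⟩
  refine subset_antisymm (closure_minimal (fun x hx => ⟨hSD hx.1, hx.2⟩) hT) ?_
  calc graphOf T D = e '' closure (M : Set (WithLp 2 (E × E))) := by
        rw [← Submodule.topologicalClosure_coe, hMG, hGe, e.surjective.image_preimage]
    _ = closure (e '' M) := e.image_closure _
    _ ⊆ closure (graphOf T S) := closure_mono hMS

theorem sqrt_mem_and_lipschitzWith [CompleteSpace E] (hC : IsResolvent T D C)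
    (hT : ClosedOp T D) (hTsub : ∀ a ∈ D, ∀ b ∈ D, T (a - b) = T a - T b) (hD : Dense D)
    (hPc : Continuous P) (hP : ∀ x y, ⟪P x, y⟫ = ⟪x, P y⟫) (hPP : ∀ x, P (P x) = C x) :
    (∀ x, P x ∈ D) ∧ LipschitzWith 1 (T ∘ P) := by
  have hPC : ∀ y, P (C y) = C (P y) := fun y => by rw [← hPP, hPP]
  refine hT.mem_and_lipschitzWith_of_dense hPc (hC.denseRange hD) ?_ ?_
  · rintro _ ⟨y, rfl⟩
    exact hPC y ▸ hC.mem _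
  · refine LipschitzOnWith.of_dist_le_mul ?_
    rintro _ ⟨x, rfl⟩ _ ⟨y, rfl⟩
    simp only [Function.comp_apply, hPC, dist_eq_norm, NNReal.coe_one, one_mul]
    rw [← hTsub _ (hC.mem _) _ (hC.mem _), ← map_sub, ← hPP x, ← hPP y,
      ← map_sub_of_inner_symm hP (P x) (P y)]
    exact hC.norm_apply_le_of_sq hP hPP _

end IsResolvent

namespace QHS

variable {H : Type} [NormedAddCommGroup H] {𝒮 : QHS H}

lemma RightLinearOn.map_sub {T : H → H} {D : Set H} (hD : 𝒮.IsSubspace D)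
    (hT : 𝒮.RightLinearOn T D) {a b : H} (ha : a ∈ D) (hb : b ∈ D) : T (a - b) = T a - T b := by
  have hnb : -b = 𝒮.smul b (-1) := (𝒮.smul_neg_one b).symm
  rw [sub_eq_add_neg, hT.1 a ha _ (hnb ▸ hD.2.2 b hb (-1)), hnb, hT.2 b hb, 𝒮.smul_neg_one,
    sub_eq_add_neg]

lemma inn_adjOp {T : H → H} {D : Set H} {u : H} (hu : u ∈ 𝒮.adjDom T D) :
    ∀ v ∈ D, 𝒮.inn (𝒮.adjOp T D u) v = 𝒮.inn u (T v) := by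
  have hu' : ∃ w : H, ∀ v ∈ D, 𝒮.inn w v = 𝒮.inn u (T v) := hu
  unfold adjOp
  rw [dif_pos hu']
  exact hu'.choose_spec

lemma eq_of_forall_inn_eq {D : Set H} (hD : Dense D) {w w' : H}
    (h : ∀ v ∈ D, 𝒮.inn w v = 𝒮.inn w' v) : w = w' := by
  obtain ⟨_, h𝒮⟩ := 𝒮.exists_isCompatible
  refine sub_eq_zero.mp (eq_zero_of_dense_of_forall_inner_eq_zero hD fun v hv => ?_)
  rw [inner_sub_left, h𝒮.inner_eq, h𝒮.inner_eq, h v hv, sub_self]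

lemma adjOp_eq {T : H → H} {D : Set H} (hD : Dense D) {u w : H}
    (h : ∀ v ∈ D, 𝒮.inn w v = 𝒮.inn u (T v)) : 𝒮.adjOp T D u = w :=
  eq_of_forall_inn_eq hD fun v hv => by rw [inn_adjOp ⟨w, h⟩ v hv, h v hv]

end QHS

namespace QHS.IsCompatible

variable {H : Type} [NormedAddCommGroup H] [InnerProductSpace ℂ H] {𝒮 : QHS H}

lemma inn_eq_inn_iff (h𝒮 : 𝒮.IsCompatible) (a b c d : H) :
    𝒮.inn a b = 𝒮.inn c d ↔ ⟪a, b⟫ = ⟪c, d⟫ ∧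
      ⟪a, 𝒮.smul b Quaternion.j⟫ = ⟪c, 𝒮.smul d Quaternion.j⟫ := by
  simp only [h𝒮.inner_eq, 𝒮.inn_smul_right]
  exact ⟨fun h => by rw [h]; exact ⟨rfl, rfl⟩, fun h => Quaternion.ext_complexPart h.1 h.2⟩

lemma inn_eq_of_forall_inner_eq (h𝒮 : 𝒮.IsCompatible) {T : H → H} {D : Set H}
    (hD : 𝒮.IsSubspace D) (hT : 𝒮.RightLinearOn T D) {a b : H}
    (h : ∀ v ∈ D, ⟪a, v⟫ = ⟪b, T v⟫) : ∀ v ∈ D, 𝒮.inn a v = 𝒮.inn b (T v) :=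
  fun v hv => (h𝒮.inn_eq_inn_iff _ _ _ _).mpr
    ⟨h v hv, hT.2 v hv Quaternion.j ▸ h _ (hD.2.2 v hv _)⟩

lemma rightLinear (h𝒮 : 𝒮.IsCompatible) (A : H →L[ℂ] H)
    (hA : ∀ x, A (𝒮.smul x Quaternion.j) = 𝒮.smul (A x) Quaternion.j) : 𝒮.RightLinear A := by
  refine ⟨map_add A, fun u q => ?_⟩
  set c := (-(q * Quaternion.j).complexPart : ℂ)
  have hq : ∀ v : H, 𝒮.smul v q = q.complexPart • v + 𝒮.smul (c • v) Quaternion.j := fun v => by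
    rw [h𝒮.smul_eq, h𝒮.smul_eq, ← 𝒮.smul_mul', ← 𝒮.smul_add', q.coe_complexPart_add]
  rw [hq, hq, map_add, map_smul, hA, map_smul]

lemma selfAdjointOp (h𝒮 : 𝒮.IsCompatible) (A : H →L[ℂ] H) (hA : A.IsSymmetric)
    (hAj : ∀ x, A (𝒮.smul x Quaternion.j) = 𝒮.smul (A x) Quaternion.j) : 𝒮.SelfAdjointOp A :=
  fun u v => (h𝒮.inn_eq_inn_iff _ _ _ _).mpr ⟨hA u v, by rw [← hAj]; exact hA _ _⟩

lemma positiveOp (h𝒮 : 𝒮.IsCompatible) (A : H →L[ℂ] H) (hA : A.IsPositive)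
    (hAj : ∀ x, A (𝒮.smul x Quaternion.j) = 𝒮.smul (A x) Quaternion.j) : 𝒮.PositiveOp A := by
  intro u
  refine ⟨Quaternion.star_eq_self.mp ?_, ?_⟩
  · rw [← 𝒮.inn_conj, h𝒮.selfAdjointOp A hA.isSymmetric hAj]
  · have h := hA.re_inner_nonneg_right u
    rwa [h𝒮.inner_eq] at h

def mulJ (h𝒮 : 𝒮.IsCompatible) : H ≃ₗ⋆[ℂ] H where
  toFun x := 𝒮.smul x Quaternion.j
  invFun x := 𝒮.smul x (-Quaternion.j)
  map_add' x y := 𝒮.add_smul' x y _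
  map_smul' c x := by
    simp only [h𝒮.smul_eq, ← 𝒮.smul_mul', Quaternion.coe_mul_j]
  left_inv x := by
    simp only [← 𝒮.smul_mul', mul_neg, Quaternion.j_mul_j, neg_neg, 𝒮.smul_one']
  right_inv x := by
    simp only [← 𝒮.smul_mul', neg_mul, Quaternion.j_mul_j, neg_neg, 𝒮.smul_one']

lemma inner_mulJ (h𝒮 : 𝒮.IsCompatible) (x y : H) :
    ⟪h𝒮.mulJ x, h𝒮.mulJ y⟫ = conj ⟪x, y⟫ := by
  change ⟪𝒮.smul x Quaternion.j, 𝒮.smul y Quaternion.j⟫ = _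
  rw [h𝒮.inner_eq, h𝒮.inner_eq, 𝒮.inn_smul_right, inn_smul_left, mul_assoc,
    Quaternion.complexPart_star_j_mul]

theorem posSqrt_spec [CompleteSpace H] (h𝒮 : 𝒮.IsCompatible) (A : H →L[ℂ] H) (hA : A.IsPositive)
    (hAj : ∀ x, A (𝒮.smul x Quaternion.j) = 𝒮.smul (A x) Quaternion.j) :
    𝒮.RightLinear (𝒮.posSqrt A) ∧ BoundedOp (𝒮.posSqrt A) ∧ 𝒮.PositiveOp (𝒮.posSqrt A) ∧
      𝒮.SelfAdjointOp (𝒮.posSqrt A) ∧ ∀ u, 𝒮.posSqrt A (𝒮.posSqrt A u) = A u := by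
  have hA0 : 0 ≤ A := (A.nonneg_iff_isPositive).mpr hA
  set R := CFC.sqrt A
  have hR : R.IsPositive := (R.nonneg_iff_isPositive).mp (CFC.sqrt_nonneg A)
  have hRj : ∀ x, R (𝒮.smul x Quaternion.j) = 𝒮.smul (R x) Quaternion.j :=
    CFC.sqrt_apply_antiunitary h𝒮.mulJ h𝒮.inner_mulJ hA0 hAj
  refine Classical.epsilon_spec (p := fun R : H → H => 𝒮.RightLinear R ∧ BoundedOp R ∧
    𝒮.PositiveOp R ∧ 𝒮.SelfAdjointOp R ∧ ∀ u, R (R u) = A u)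
    ⟨R, h𝒮.rightLinear R hRj, ⟨‖R‖, R.le_opNorm⟩, h𝒮.positiveOp R hR hRj,
      h𝒮.selfAdjointOp R hR.isSymmetric hRj, fun u => ?_⟩
  rw [← mul_apply_eq_comp, CFC.sqrt_mul_sqrt_self A hA0]

variable {T : H → H} {D : Set H}

def graphSubmodule (h𝒮 : 𝒮.IsCompatible) (hD : 𝒮.IsSubspace D) (hT : 𝒮.RightLinearOn T D) :
    Submodule ℂ (WithLp 2 (H × H)) where
  carrier := {p | p.fst ∈ D ∧ p.snd = T p.fst}
  add_mem' := by
    rintro p q ⟨hp, hTp⟩ ⟨hq, hTq⟩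
    exact ⟨hD.2.1 _ hp _ hq, by simp [WithLp.add_fst, WithLp.add_snd, hT.1 _ hp _ hq, hTp, hTq]⟩
  zero_mem' := by
    refine ⟨hD.1, ?_⟩
    have h := hT.2 0 hD.1 0
    rw [𝒮.zero_smul, 𝒮.zero_smul] at h
    exact h.symm
  smul_mem' := by
    rintro c p ⟨hp, hTp⟩
    refine ⟨by rw [WithLp.smul_fst, h𝒮.smul_eq]; exact hD.2.2 _ hp c, ?_⟩
    simp only [WithLp.smul_fst, WithLp.smul_snd, h𝒮.smul_eq, hT.2 _ hp, hTp]

theorem exists_isResolvent [CompleteSpace H] (h𝒮 : 𝒮.IsCompatible) (hD : 𝒮.IsSubspace D)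
    (hT : 𝒮.RightLinearOn T D) (hclosed : ClosedOp T D) : ∃ C : H →L[ℂ] H, IsResolvent T D C := by
  let G := h𝒮.graphSubmodule hD hT
  have : CompleteSpace G :=
    (hclosed.preimage (WithLp.prodContinuousLinearEquiv 2 ℂ H H).continuous).completeSpace_coe
  exact ⟨graphResolvent G, isResolvent_graphResolvent G fun _ => Iff.rfl⟩

end QHS.IsCompatible

namespace IsResolvent

variable {H : Type} [NormedAddCommGroup H] [InnerProductSpace ℂ H] {𝒮 : QHS H} {T : H → H}
  {D : Set H} {C : H →L[ℂ] H}

lemma inn_sub (hC : IsResolvent T D C) (h𝒮 : 𝒮.IsCompatible) (hD : 𝒮.IsSubspace D)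
    (hT : 𝒮.RightLinearOn T D) (y : H) : ∀ v ∈ D, 𝒮.inn (y - C y) v = 𝒮.inn (T (C y)) (T v) :=
  h𝒮.inn_eq_of_forall_inner_eq hD hT (hC.inner_sub y)

lemma map_smul_quaternion (hC : IsResolvent T D C) (h𝒮 : 𝒮.IsCompatible)
    (hD : 𝒮.IsSubspace D) (hT : 𝒮.RightLinearOn T D) (y : H) (q : ℍ) :
    C (𝒮.smul y q) = 𝒮.smul (C y) q := by
  have hw : ∀ v ∈ D, ⟪𝒮.smul (y - C y) q, v⟫ = ⟪T (𝒮.smul (C y) q), T v⟫ :=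
    fun v hv => by
      rw [h𝒮.inner_eq, h𝒮.inner_eq, QHS.inn_smul_left, hC.inn_sub h𝒮 hD hT y v hv,
        hT.2 _ (hC.mem y), QHS.inn_smul_left]
  rw [← hC.apply_add _ (hD.2.2 _ (hC.mem y) q) _ hw, ← 𝒮.add_smul', add_sub_cancel]

lemma rightLinear (hC : IsResolvent T D C) (h𝒮 : 𝒮.IsCompatible) (hD : 𝒮.IsSubspace D)
    (hT : 𝒮.RightLinearOn T D) : 𝒮.RightLinear C :=
  ⟨map_add C, hC.map_smul_quaternion h𝒮 hD hT⟩

lemma apply_mem_adjDom (hC : IsResolvent T D C) (h𝒮 : 𝒮.IsCompatible) (hD : 𝒮.IsSubspace D)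
    (hT : 𝒮.RightLinearOn T D) (y : H) : T (C y) ∈ 𝒮.adjDom T D :=
  ⟨y - C y, hC.inn_sub h𝒮 hD hT y⟩

lemma add_adjOp_apply (hC : IsResolvent T D C) (h𝒮 : 𝒮.IsCompatible) (hD : 𝒮.IsSubspace D)
    (hT : 𝒮.RightLinearOn T D) (hdense : Dense D) (y : H) :
    C y + 𝒮.adjOp T D (T (C y)) = y := by
  rw [QHS.adjOp_eq hdense (hC.inn_sub h𝒮 hD hT y), add_sub_cancel]

lemma apply_add_adjOp (hC : IsResolvent T D C) (h𝒮 : 𝒮.IsCompatible) {u : H} (hu : u ∈ D)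
    (hTu : T u ∈ 𝒮.adjDom T D) : C (u + 𝒮.adjOp T D (T u)) = u :=
  hC.apply_add u hu _ fun v hv => by
    rw [h𝒮.inner_eq, h𝒮.inner_eq, QHS.inn_adjOp hTu v hv]

lemma image_univ (hC : IsResolvent T D C) (h𝒮 : 𝒮.IsCompatible) (hD : 𝒮.IsSubspace D)
    (hT : 𝒮.RightLinearOn T D) :
    C '' Set.univ = {u ∈ D | T u ∈ 𝒮.adjDom T D} := by
  ext u
  constructor
  · rintro ⟨y, -, rfl⟩
    exact ⟨hC.mem y, hC.apply_mem_adjDom h𝒮 hD hT y⟩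
  · rintro ⟨hu, hTu⟩
    exact ⟨_, Set.mem_univ _, hC.apply_add_adjOp h𝒮 hu hTu⟩

end IsResolvent

/-- For a closed densely defined operator `T`, the operator
`C_T = (1 + T*T)⁻¹` is a well-defined positive bounded operator with range `D(T*T)`,
`Z_T = T √(C_T)` is everywhere defined and bounded with `‖Z_T‖ ≤ 1`,
`1 - Z_T* Z_T = C_T`, `Ran √(C_T)` is a core for `T`, and
`T` is the closure of `Z_T (√(1 - Z_T* Z_T))⁻¹`. -/
theorem bounded_transform_properties
    {H : Type} [NormedAddCommGroup H] [CompleteSpace H] (𝒮 : QHS H)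
    (T : H → H) (D : Set H)
    (hD : 𝒮.IsSubspace D) (hdense : Dense D) (hlin : 𝒮.RightLinearOn T D)
    (hclosed : ClosedOp T D) :
    ∃ C : H → H,
      -- (a) C = (1 + T*T)⁻¹ is well defined, bounded, positive, with range D(T*T)
      𝒮.RightLinear C ∧ BoundedOp C ∧ 𝒮.PositiveOp C ∧ 𝒮.SelfAdjointOp C ∧
      (∀ y : H, C y ∈ D ∧ T (C y) ∈ 𝒮.adjDom T D ∧ C y + 𝒮.adjOp T D (T (C y)) = y) ∧
      (∀ u ∈ D, T u ∈ 𝒮.adjDom T D → C (u + 𝒮.adjOp T D (T u)) = u) ∧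
      (C '' Set.univ = {u ∈ D | T u ∈ 𝒮.adjDom T D}) ∧
      -- (b) properties of Z_T = T √(C_T)
      ((∀ u : H, 𝒮.posSqrt C u ∈ D) ∧
        (∀ u : H, ‖T (𝒮.posSqrt C u)‖ ≤ 1 * ‖u‖) ∧
        -- 1 - Z_T* Z_T = C_T
        (∀ Zs : H → H, 𝒮.AdjointPair (fun u => T (𝒮.posSqrt C u)) Zs →
          ∀ u : H, u - Zs (T (𝒮.posSqrt C u)) = C u) ∧
        -- Ran(√C) is a core for T, i.e. T = closure of Z_T (√(1 - Z_T*Z_T))⁻¹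
        closure (graphOf T (𝒮.posSqrt C '' Set.univ)) = graphOf T D) := by
  obtain ⟨_, h𝒮⟩ := 𝒮.exists_isCompatible
  obtain ⟨C, hC⟩ := h𝒮.exists_isResolvent hD hlin hclosed
  have hCj : ∀ x, C (𝒮.smul x Quaternion.j) = 𝒮.smul (C x) Quaternion.j :=
    fun x => hC.map_smul_quaternion h𝒮 hD hlin x _
  obtain ⟨hPlin, hPbdd, -, hPsa, hPP⟩ := h𝒮.posSqrt_spec C hC.isPositive hCj
  set P := 𝒮.posSqrt C
  have hPsymm : ∀ x y, ⟪P x, y⟫ = ⟪x, P y⟫ := fun x y => by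
    rw [h𝒮.inner_eq, h𝒮.inner_eq, hPsa]
  obtain ⟨hPD, hTP⟩ := hC.sqrt_mem_and_lipschitzWith hclosed
    (fun a ha b hb => hlin.map_sub hD ha hb) hdense (hPbdd.continuous hPlin.1) hPsymm hPP
  have hZ := hC.inner_sqrt hdense hPsymm hPP hPD hTP.continuous
  refine ⟨C, hC.rightLinear h𝒮 hD hlin, ⟨‖C‖, C.le_opNorm⟩, h𝒮.positiveOp C hC.isPositive hCj,
    h𝒮.selfAdjointOp C hC.isPositive.isSymmetric hCj,
    fun y => ⟨hC.mem y, hC.apply_mem_adjDom h𝒮 hD hlin y, hC.add_adjOp_apply h𝒮 hD hlin hdense y⟩,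
    fun u hu hTu => hC.apply_add_adjOp h𝒮 hu hTu, hC.image_univ h𝒮 hD hlin, hPD,
    fun u => (one_mul ‖u‖).symm ▸ hC.norm_apply_sqrt_le hPsymm hTP u,
    fun Zs hZs => hC.sub_adjoint_apply hZ fun a v => by rw [h𝒮.inner_eq, h𝒮.inner_eq, hZs],
    hC.closure_graphOf hclosed (h𝒮.graphSubmodule hD hlin) (fun _ => Iff.rfl)
      (fun _ ⟨y, hy⟩ => ⟨P y, trivial, hy ▸ hPP y⟩) (fun _ ⟨x, _, hx⟩ => hx ▸ hPD x)⟩
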